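/- arXiv:1806.10007 — 2 statements merged into one kernel-verified Lean document; each statement's English description precedes it below -/
import Mathlib

section
/- For every integer n ≥ 1 and every word v = v₁v₂⋯vₙ in V, θ(v) = Σ_{σ ∈ Sₙ} v_{σ(1)}v_{σ(2)}⋯v_{σ(n)} · Π_{(i,j) ∈ Inv(σ)} q^{⟨v_{σ(i)}, v_{σ(j)}⟩}, where Sₙ is the symmetric group on {1,…,n} and Inv(σ) = {(i,j) : 1 ≤ i < j ≤ n, σ(i) > σ(j)} is the set of inversions of σ. -/
noncomputable section
namespace SqPaper

/-- The two letters: `0 ↦ A`, `1 ↦ B`. -/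
abbrev Ltr := Fin 2
def lA : Ltr := 0
def lB : Ltr := 1

/-- The pairing `⟨ , ⟩` on letters: `⟨A,A⟩=⟨B,B⟩=2`, `⟨A,B⟩=⟨B,A⟩=-2`. -/
def brk (x y : Ltr) : ℤ := if x = y then 2 else -2

variable (F : Type*) [Field F]

/-- The free algebra `V` on the two generators, realized as the monoid algebra of the
free monoid on two letters; the words form the standard basis. -/
abbrev FA := MonoidAlgebra F (FreeMonoid Ltr)

/-- The standard basis vector attached to a word (list of letters). -/
def wd (l : List Ltr) : FA F := MonoidAlgebra.single (FreeMonoid.ofList l) 1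

def Agen : FA F := wd F [lA]
def Bgen : FA F := wd F [lB]

/-- View an element of `V` as a finitely supported function on words. -/
def fsp (v : FA F) : FreeMonoid Ltr →₀ F := v.coeff

/-- The symmetric bilinear form on `V` for which the standard basis of words is orthonormal. -/
def form (u v : FA F) : F := (fsp F u).sum fun w c => c * (fsp F v) w

/-- Extend a function on words to an `F`-linear map on `V`. -/
def mkMap {M : Type*} [AddCommMonoid M] [Module F M] (f : List Ltr → M) :
    FA F →ₗ[F] M :=
  Finsupp.lsum F (fun w => LinearMap.toSpanSingleton F M (f (FreeMonoid.toList w)))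
    ∘ₗ (MonoidAlgebra.coeffLinearEquiv F).toLinearMap

/-- `[3]_q = (q³ - q⁻³)/(q - q⁻¹)`. -/
def tri (q : F) : F := (q ^ 3 - q⁻¹ ^ 3) / (q - q⁻¹)

/-- The q-shuffle product on words. -/
def shufW (q : F) : List Ltr → List Ltr → FA F
  | [], v => wd F v
  | u, [] => wd F u
  | a :: u, b :: v =>
      wd F [a] * shufW q u (b :: v) +
        (q ^ (((a :: u).map (fun x => brk x b)).sum)) • (wd F [b] * shufW q (a :: u) v)
  termination_by u v => u.length + v.length

/-- The q-shuffle product `⋆` on `V`, as a bilinear map. -/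
def qshuf (q : F) : FA F →ₗ[F] FA F →ₗ[F] FA F :=
  mkMap F fun u => mkMap F fun v => shufW F q u v

/-- Iterated `⋆`-product of the letters of a word. -/
def thetaW (q : F) : List Ltr → FA F
  | [] => 1
  | a :: t => qshuf F q (wd F [a]) (thetaW q t)

/-- `θ : V → V`, the algebra homomorphism from the free algebra to the q-shuffle algebra
with `θ(A) = A`, `θ(B) = B`. -/
def theta (q : F) : FA F →ₗ[F] FA F := mkMap F fun l => thetaW F q l

/-- `A_L`, left multiplication by `A` in the free algebra. -/
def AL : FA F →ₗ[F] FA F := LinearMap.mulLeft F (Agen F)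
def BL : FA F →ₗ[F] FA F := LinearMap.mulLeft F (Bgen F)
def AR : FA F →ₗ[F] FA F := LinearMap.mulRight F (Agen F)
def BR : FA F →ₗ[F] FA F := LinearMap.mulRight F (Bgen F)

/-- `X*_L` (for the letter `x`): deletes the letter `x` from the front of a word. -/
def delL (x : Ltr) : FA F →ₗ[F] FA F :=
  mkMap F fun l => if l.head? = some x then wd F l.tail else 0

/-- `X*_R` (for the letter `x`): deletes the letter `x` from the end of a word. -/
def delR (x : Ltr) : FA F →ₗ[F] FA F :=
  mkMap F fun l => if l.getLast? = some x then wd F l.dropLast else 0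

/-- `X_ℓ`: left q-shuffle multiplication by the letter `x`. -/
def shL (q : F) (x : Ltr) : FA F →ₗ[F] FA F := qshuf F q (wd F [x])

/-- `X_r`: right q-shuffle multiplication by the letter `x`. -/
def shR (q : F) (x : Ltr) : FA F →ₗ[F] FA F := (qshuf F q).flip (wd F [x])

/-- `X*_ℓ`: the weighted deletion map, deleting an occurrence of the letter `x`
with weight `q^{⟨v₁,x⟩+⋯+⟨v_{i-1},x⟩}`. -/
def lowL (q : F) (x : Ltr) : FA F →ₗ[F] FA F :=
  mkMap F fun l =>
    ∑ i ∈ Finset.range l.length,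
      if l[i]? = some x then
        (q ^ (((l.take i).map (fun y => brk y x)).sum)) • wd F (l.eraseIdx i)
      else 0

/-- `X*_r`: the weighted deletion map, deleting an occurrence of the letter `x`
with weight `q^{⟨vₙ,x⟩+⋯+⟨v_{i+1},x⟩}`. -/
def lowR (q : F) (x : Ltr) : FA F →ₗ[F] FA F :=
  mkMap F fun l =>
    ∑ i ∈ Finset.range l.length,
      if l[i]? = some x then
        (q ^ (((l.drop (i + 1)).map (fun y => brk y x)).sum)) • wd F (l.eraseIdx i)
      else 0

/-- `K`, the algebra automorphism of the free algebra `V` with `K(A) = q²A`, `K(B) = q⁻²B`;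
on a word `v = v₁⋯vₙ` it acts as `K(v) = v·q^{⟨v₁,A⟩+⋯+⟨vₙ,A⟩}`. -/
def Kop (q : F) : FA F →ₗ[F] FA F :=
  mkMap F fun l => (q ^ ((l.map (fun y => brk y lA)).sum)) • wd F l

/-- `K⁻¹`; on a word `v = v₁⋯vₙ` it acts as `K⁻¹(v) = v·q^{⟨v₁,B⟩+⋯+⟨vₙ,B⟩}`. -/
def Kinv (q : F) : FA F →ₗ[F] FA F :=
  mkMap F fun l => (q ^ ((l.map (fun y => brk y lB)).sum)) • wd F l

/-- `T`, the automorphism of the free algebra swapping `A` and `B`. -/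
def Top : FA F →ₗ[F] FA F :=
  mkMap F fun l => wd F (l.map (fun x => if x = lA then lB else lA))

/-- `Â = Q(A_L − K B_R)` and `B̂ = Q(B_L − K⁻¹ A_R)` where `Q = 1 - q²`. -/
def hatOp (q : F) (a : Ltr) : FA F →ₗ[F] FA F :=
  if a = lA then (1 - q ^ 2) • (AL F - Kop F q ∘ₗ BR F)
  else (1 - q ^ 2) • (BL F - Kinv F q ∘ₗ AR F)

def phiW (q : F) : List Ltr → FA F
  | [] => 1
  | a :: t => hatOp F q a (phiW q t)

/-- The map `φ`: `φ(1) = 1` and `φ(v₁⋯vₙ) = v̂₁v̂₂⋯v̂ₙ(1)`. -/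
def phi (q : F) : FA F →ₗ[F] FA F := mkMap F fun l => phiW F q l

/-- `ψ = K B_R A*_L + K⁻¹ A_R B*_L`. -/
def psi (q : F) : FA F →ₗ[F] FA F :=
  Kop F q ∘ₗ BR F ∘ₗ delL F lA + Kinv F q ∘ₗ AR F ∘ₗ delL F lB

/-- `V_n`, the span of the words of length `n`. -/
def Vn (n : ℕ) : Submodule F (FA F) :=
  Submodule.span F { x | ∃ l : List Ltr, l.length = n ∧ x = wd F l }

/-- `J⁺ = A³B − [3]_q A²BA + [3]_q ABA² − BA³`. -/
def Jp (q : F) : FA F :=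
  Agen F ^ 3 * Bgen F - tri F q • (Agen F ^ 2 * Bgen F * Agen F)
    + tri F q • (Agen F * Bgen F * Agen F ^ 2) - Bgen F * Agen F ^ 3

/-- `J⁻ = B³A − [3]_q B²AB + [3]_q BAB² − AB³`. -/
def Jm (q : F) : FA F :=
  Bgen F ^ 3 * Agen F - tri F q • (Bgen F ^ 2 * Agen F * Bgen F)
    + tri F q • (Bgen F * Agen F * Bgen F ^ 2) - Agen F * Bgen F ^ 3

/-- `J`, the two-sided ideal of the free algebra generated by `J⁺` and `J⁻`
(realized as the `F`-span of the elements `a·J^±·b`). -/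
def Jsub (q : F) : Submodule F (FA F) :=
  Submodule.span F { x | ∃ a b : FA F, x = a * Jp F q * b ∨ x = a * Jm F q * b }

/-- `U`, the subalgebra of the q-shuffle algebra `(V,⋆)` generated by `A` and `B`,
realized as the span of all `⋆`-products of the letters. -/
def Usub (q : F) : Submodule F (FA F) :=
  Submodule.span F (Set.range fun l : List Ltr => thetaW F q l)

/-- A `□_q`-module structure on an `F`-vector space `M`: four operators
`x₀, x₁, x₂, x₃` (indices mod 4) satisfying the q-Weyl and q-Serre relations. -/
structure SqAct (q : F) (M : Type*) [AddCommGroup M] [Module F M] where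
  x : ZMod 4 → Module.End F M
  weyl : ∀ i : ZMod 4,
    q • (x i * x (i + 1)) - q⁻¹ • (x (i + 1) * x i) = (q - q⁻¹) • (1 : Module.End F M)
  serre : ∀ i : ZMod 4,
    x i ^ 3 * x (i + 2) - tri F q • (x i ^ 2 * x (i + 2) * x i)
      + tri F q • (x i * x (i + 2) * x i ^ 2) - x (i + 2) * x i ^ 3 = 0

variable {F} {q : F} {M : Type*} [AddCommGroup M] [Module F M]

/-- A `□_q`-module `M` is generated by `ξ` if no proper submodule
(subspace invariant under all the `xᵢ`) contains `ξ`. -/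
def SqAct.Gen (S : SqAct F q M) (ξ : M) : Prop :=
  ∀ W : Submodule F M, (∀ i : ZMod 4, ∀ m ∈ W, S.x i m ∈ W) → ξ ∈ W → W = ⊤

/-- `W_n`: the span of the vectors `u₁u₂⋯uₙ·ξ` with each `uᵢ ∈ {x₀, x₂}`. -/
def SqAct.Wn (S : SqAct F q M) (ξ : M) (n : ℕ) : Submodule F M :=
  Submodule.span F
    { m | ∃ l : List (ZMod 4), l.length = n ∧ (∀ i ∈ l, i = 0 ∨ i = 2) ∧
        m = l.foldr (fun i acc => S.x i acc) ξ }

end SqPaper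

/-! By definition `θ(v₁v₂⋯vₙ) = v₁ ⋆ θ(v₂⋯vₙ)`, and `⋆`-multiplying a word `w` on the left by a
single letter `a` inserts `a` at each position `i` of `w`, with weight
`q^{⟨a,w₁⟩+⋯+⟨a,w_i⟩}`. A permutation `σ` of `{0,…,n}` amounts to the position `i = σ⁻¹(0)`
together with a permutation `τ` of the remaining positions; since `σ(i) = 0` is the smallest
value, the inversions of `σ` are those of `τ` together with the pairs `(j, i)` with `j < i`.
So the inversion weight of `σ` is that of `τ` times exactly the insertion weight, and the formula
follows by induction on `n`. -/

open Equiv Finset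

theorem List.ofFn_eq_insertIdx_succAbove {α : Type*} : ∀ {n : ℕ} (f : Fin (n + 1) → α)
    (i : Fin (n + 1)), List.ofFn f = (List.ofFn (f ∘ i.succAbove)).insertIdx i (f i)
  | 0, f, i => by
    fin_cases i
    simp
  | n + 1, f, i => by
    cases i using Fin.cases with
    | zero => simp [List.ofFn_succ]
    | succ j =>
      have ih := List.ofFn_eq_insertIdx_succAbove (fun k => f k.succ) j
      rw [List.ofFn_succ (f := f), ih, List.ofFn_succ (f := f ∘ _)]
      simp [Function.comp_def, Fin.succ_succAbove_succ]

theorem List.sum_map_take_ofFn {α M : Type*} [AddCommMonoid M] (g : α → M) :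
    ∀ {n : ℕ} (u : Fin n → α) (i : ℕ),
      (((List.ofFn u).take i).map g).sum = ∑ j : Fin n, if (j : ℕ) < i then g (u j) else 0
  | 0, u, i => by simp
  | n + 1, u, 0 => by simp
  | n + 1, u, i + 1 => by
    rw [List.ofFn_succ, List.take_succ_cons, List.map_cons, List.sum_cons,
      List.sum_map_take_ofFn g _ i, Fin.sum_univ_succ]
    simp

namespace SqPaper

lemma brk_comm (x y : Ltr) : brk x y = brk y x := by
  simp only [brk, eq_comm]

section Permutations

variable {n : ℕ}

def inversionSum {α M : Type*} [AddCommMonoid M] (g : α → α → M) (v : Fin n → α)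
    (σ : Perm (Fin n)) : M :=
  ∑ p ∈ univ.filter (fun p : Fin n × Fin n => p.1 < p.2 ∧ σ p.2 < σ p.1),
    g (v (σ p.1)) (v (σ p.2))

def insertPerm (i : Fin (n + 1)) (τ : Perm (Fin n)) : Perm (Fin (n + 1)) :=
  (finSuccEquiv' i).trans ((Equiv.optionCongr τ).trans (finSuccEquiv n).symm)

@[simp] lemma insertPerm_self (i : Fin (n + 1)) (τ : Perm (Fin n)) : insertPerm i τ i = 0 := by
  simp [insertPerm]

@[simp] lemma insertPerm_succAbove (i : Fin (n + 1)) (τ : Perm (Fin n)) (j : Fin n) :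
    insertPerm i τ (i.succAbove j) = (τ j).succ := by
  simp [insertPerm]

lemma insertPerm_bijective :
    Function.Bijective fun p : Perm (Fin n) × Fin (n + 1) => insertPerm p.2 p.1 := by
  refine (Fintype.bijective_iff_injective_and_card _).2 ⟨?_, ?_⟩
  · rintro ⟨τ, i⟩ ⟨τ', i'⟩ h
    dsimp only at h
    obtain rfl : i = i' := (insertPerm i τ).injective <| by rw [insertPerm_self, h, insertPerm_self]
    refine Prod.ext (Equiv.ext fun j => Fin.succ_injective _ ?_) rfl
    rw [← insertPerm_succAbove i, ← insertPerm_succAbove i, h]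
  · simp [Fintype.card_perm, Nat.factorial_succ, mul_comm]

lemma ofFn_comp_insertPerm {α : Type*} (v : Fin (n + 1) → α) (i : Fin (n + 1))
    (τ : Perm (Fin n)) :
    List.ofFn (v ∘ insertPerm i τ) = (List.ofFn (v ∘ Fin.succ ∘ τ)).insertIdx i (v 0) := by
  rw [List.ofFn_eq_insertIdx_succAbove _ i]
  simp [Function.comp_def]

lemma inversionSum_insertPerm {α M : Type*} [AddCommMonoid M] (g : α → α → M)
    (v : Fin (n + 1) → α) (i : Fin (n + 1)) (τ : Perm (Fin n)) :
    inversionSum g v (insertPerm i τ) =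
      inversionSum g (v ∘ Fin.succ) τ +
        ∑ j : Fin n, if (j : ℕ) < i then g (v (τ j).succ) (v 0) else 0 := by
  unfold inversionSum
  rw [sum_filter, sum_filter, ← ((finSuccEquiv' i).symm.prodCongr (finSuccEquiv' i).symm).sum_comp,
    Fintype.sum_prod_type]
  simp only [Fintype.sum_option, Equiv.prodCongr_apply, Prod.map, finSuccEquiv'_symm_none,
    finSuccEquiv'_symm_some, insertPerm_self, insertPerm_succAbove]
  simp [Fin.succAbove_lt_iff_castSucc_lt, Fintype.sum_prod_type, sum_add_distrib]
  exact add_comm _ _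

end Permutations

section Shuffle

variable {F : Type*} [Field F]

lemma mkMap_wd {M : Type*} [AddCommMonoid M] [Module F M] (f : List Ltr → M) (l : List Ltr) :
    mkMap F f (wd F l) = f l := by
  change (Finsupp.lsum F fun w => LinearMap.toSpanSingleton F M (f (FreeMonoid.toList w)))
      (Finsupp.single (FreeMonoid.ofList l) 1) = f l
  rw [Finsupp.lsum_single, LinearMap.toSpanSingleton_apply, one_smul, FreeMonoid.toList_ofList]

lemma qshuf_wd (q : F) (u v : List Ltr) : qshuf F q (wd F u) (wd F v) = shufW F q u v := by
  rw [qshuf, mkMap_wd, mkMap_wd]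

lemma wd_append (l l' : List Ltr) : wd F (l ++ l') = wd F l * wd F l' := by
  rw [wd, wd, wd, MonoidAlgebra.single_mul_single, one_mul]
  rfl

lemma shufW_nil_left (q : F) (v : List Ltr) : shufW F q [] v = wd F v := by
  cases v <;> rw [shufW]

lemma shufW_singleton {q : F} (hq : q ≠ 0) (a : Ltr) (w : List Ltr) :
    shufW F q [a] w = ∑ i ∈ range (w.length + 1),
      q ^ ((w.take i).map (brk a)).sum • wd F (w.insertIdx i a) := by
  induction w with
  | nil => simp [shufW]
  | cons b v ih =>
    rw [shufW, shufW_nil_left, ← wd_append, ih, mul_sum, smul_sum, List.length_cons,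
      sum_range_succ' (n := v.length + 1), add_comm]
    congr 1
    · refine sum_congr rfl fun i _ => ?_
      rw [mul_smul_comm, smul_smul, ← zpow_add₀ hq, ← wd_append]
      simp [List.take_succ_cons, List.insertIdx_succ_cons]
    · simp

lemma thetaW_ofFn {q : F} (hq : q ≠ 0) : ∀ {n : ℕ} (v : Fin n → Ltr),
    thetaW F q (List.ofFn v) =
      ∑ σ : Perm (Fin n), q ^ inversionSum brk v σ • wd F (List.ofFn (v ∘ σ))
  | 0, v => by simp [thetaW, wd, MonoidAlgebra.one_def, inversionSum]
  | n + 1, v => by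
    rw [List.ofFn_succ, thetaW, thetaW_ofFn hq, map_sum]
    simp only [map_smul, qshuf_wd, shufW_singleton hq, List.length_ofFn, smul_sum, smul_smul,
      ← Fin.sum_univ_eq_sum_range, ← Fintype.sum_prod_type']
    refine Fintype.sum_bijective _ insertPerm_bijective _ _ fun ⟨τ, i⟩ => ?_
    rw [ofFn_comp_insertPerm, inversionSum_insertPerm, zpow_add₀ hq, List.sum_map_take_ofFn]
    simp only [brk_comm (v 0)]
    rfl

end Shuffle

end SqPaper

open SqPaper in
theorem theta_apply_word_general (F : Type*) [Field F] (q : F) (hq : q ≠ 0) (n : ℕ) (v : Fin n → Ltr) :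
    theta F q (wd F (List.ofFn v)) =
      ∑ σ : Equiv.Perm (Fin n),
        (q ^ (∑ p ∈ Finset.filter
              (fun p : Fin n × Fin n => p.1 < p.2 ∧ σ p.2 < σ p.1) Finset.univ,
            brk (v (σ p.1)) (v (σ p.2)))) •
          wd F (List.ofFn fun i => v (σ i)) :=
  (mkMap_wd _ _).trans (thetaW_ofFn hq v)

open SqPaper in
/-- the action of `θ` on a word, as a sum over permutations weighted by inversions. -/
theorem theta_apply_word (F : Type*) [Field F] (q : F) (hq : q ≠ 0)
    (hq1 : ∀ k : ℕ, 0 < k → q ^ k ≠ 1) (n : ℕ) (hn : 1 ≤ n) (v : Fin n → Ltr) :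
    theta F q (wd F (List.ofFn v)) =
      ∑ σ : Equiv.Perm (Fin n),
        (q ^ (∑ p ∈ Finset.filter
              (fun p : Fin n × Fin n => p.1 < p.2 ∧ σ p.2 < σ p.1) Finset.univ,
            brk (v (σ p.1)) (v (σ p.2)))) •
          wd F (List.ofFn fun i => v (σ i)) :=
  theta_apply_word_general F q hq n v
end
end

section
/- Let W be a nonzero F-subspace of V with A*_L(W) ⊆ W and B*_L(W) ⊆ W. Then 1 ∈ W. (Moreover, for v ∈ V one has A*_L(v) = 0 and B*_L(v) = 0 if and only if v ∈ V₀ = F·1.) -/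
noncomputable section
namespace SqPaper

variable (F : Type*) [Field F]

variable {F} {q : F} {M : Type*} [AddCommGroup M] [Module F M]

/-! The coefficient of a word `u` in `X*_L v` is the coefficient of `x u` in `v`. Hence, for a
nonzero `v` in an invariant subspace and a longest word `w` in its support, deleting the letters
of `w` one after the other stays in the subspace and leaves the nonzero multiple
`(coefficient of w in v) • 1`. -/

open MonoidAlgebra

theorem mkMap_single {M : Type*} [AddCommMonoid M] [Module F M] (f : List Ltr → M)
    (w : FreeMonoid Ltr) (c : F) :
    mkMap F f (single w c) = c • f (FreeMonoid.toList w) := by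
  simp [mkMap, coeffLinearEquiv_apply]

theorem coeff_delL (x : Ltr) (v : FA F) (w : FreeMonoid Ltr) :
    (delL F x v).coeff w = v.coeff (FreeMonoid.of x * w) := by
  induction v using MonoidAlgebra.induction_linear with
  | zero => simp
  | add v v' hv hv' => simp [hv, hv']
  | single m c =>
    cases m with
    | one => simp [delL, mkMap_single]
    | of_mul y m =>
      by_cases hy : y = x
      · subst hy
        simp [delL, mkMap_single, wd, Finsupp.single_apply_left (mul_right_injective _)]
      · have hne : FreeMonoid.of y * m ≠ FreeMonoid.of x * w := fun h =>
          hy (List.head_eq_of_cons_eq (congrArg FreeMonoid.toList h))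
        simp [delL, mkMap_single, hy, Finsupp.single_eq_of_ne' hne]

theorem delL_eq_zero_iff {x : Ltr} {v : FA F} :
    delL F x v = 0 ↔ ∀ w, v.coeff (FreeMonoid.of x * w) = 0 := by
  simp [← coeff_eq_zero, Finsupp.ext_iff, coeff_delL]

theorem mem_span_one_iff {v : FA F} : v ∈ F ∙ (1 : FA F) ↔ ∀ w ≠ 1, v.coeff w = 0 := by
  rw [Submodule.mem_span_singleton, one_def]
  constructor
  · rintro ⟨c, rfl⟩ w hw
    simp [Finsupp.single_eq_of_ne hw]
  · intro h
    refine ⟨v.coeff 1, ?_⟩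
    ext w
    by_cases hw : w = 1
    · simp [hw]
    · simp [Finsupp.single_eq_of_ne hw, h w hw]

theorem forall_delL_eq_zero_iff {v : FA F} : (∀ x, delL F x v = 0) ↔ v ∈ F ∙ (1 : FA F) := by
  simp only [delL_eq_zero_iff, mem_span_one_iff]
  constructor
  · intro h w hw
    cases w with
    | one => exact absurd rfl hw
    | of_mul x w => exact h x w
  · intro h x w
    exact h _ (by simp)

theorem Vn_zero : Vn F 0 = F ∙ (1 : FA F) := by
  simp only [Vn, List.length_eq_zero_iff, exists_eq_left, Set.ofPred_eq_eq_singleton]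
  rfl

section Invariant

variable {W : Submodule F (FA F)} (hW : ∀ x, ∀ v ∈ W, delL F x v ∈ W)
include hW

theorem exists_mem_coeff_eq_coeff_mul (w : FreeMonoid Ltr) {v : FA F} (hv : v ∈ W) :
    ∃ v' ∈ W, ∀ u, v'.coeff u = v.coeff (w * u) := by
  induction w using FreeMonoid.inductionOn' generalizing v with
  | one => exact ⟨v, hv, by simp⟩
  | of_mul x w ih =>
    obtain ⟨v', hv'W, hv'⟩ := ih (hW x v hv)
    exact ⟨v', hv'W, fun u => by rw [hv', coeff_delL, mul_assoc]⟩

theorem one_mem_of_delL_mem (hne : W ≠ ⊥) : (1 : FA F) ∈ W := by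
  obtain ⟨v, hvW, hv0⟩ := W.exists_mem_ne_zero_of_ne_bot hne
  have hsupp : v.coeff.support.Nonempty := by simpa using hv0
  obtain ⟨w, hw, hmax⟩ := v.coeff.support.exists_max_image FreeMonoid.length hsupp
  obtain ⟨v', hv'W, hv'⟩ := exists_mem_coeff_eq_coeff_mul hW w hvW
  have hv'_mem : v' ∈ F ∙ (1 : FA F) := by
    refine mem_span_one_iff.mpr fun u hu => ?_
    rw [hv']
    by_contra hcoeff
    have hlen := hmax _ (Finsupp.mem_support_iff.mpr hcoeff)
    rw [FreeMonoid.length_mul] at hlen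
    exact hu (FreeMonoid.length_eq_zero.mp (by omega))
  obtain ⟨c, rfl⟩ := Submodule.mem_span_singleton.mp hv'_mem
  have hc : c = v.coeff w := by simpa [one_def] using hv' 1
  have hc0 : c ≠ 0 := hc ▸ Finsupp.mem_support_iff.mp hw
  simpa [hc0] using W.smul_mem c⁻¹ hv'W

end Invariant

end SqPaper
open SqPaper in
theorem delL_invariant_subspace_general (F : Type*) [Field F] :
    (∀ W : Submodule F (FA F), W ≠ ⊥ →
      (∀ v ∈ W, delL F lA v ∈ W) → (∀ v ∈ W, delL F lB v ∈ W) → (1 : FA F) ∈ W) ∧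
      (∀ v : FA F, (delL F lA v = 0 ∧ delL F lB v = 0) ↔ v ∈ Vn F 0) := by
  refine ⟨fun W hne hA hB => one_mem_of_delL_mem (fun x => ?_) hne, fun v => ?_⟩
  · fin_cases x
    exacts [hA, hB]
  · rw [Vn_zero, ← forall_delL_eq_zero_iff]
    exact (Fin.forall_fin_two (p := fun x => delL F x v = 0)).symm

open SqPaper in
/-- any nonzero subspace of `V` invariant under `A*_L` and `B*_L`
contains `1`; moreover `A*_L(v) = 0 = B*_L(v)` iff `v ∈ V₀ = F·1`. -/
theorem delL_invariant_subspace (F : Type*) [Field F] (q : F) (hq : q ≠ 0)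
    (hq1 : ∀ k : ℕ, 0 < k → q ^ k ≠ 1) :
    (∀ W : Submodule F (FA F), W ≠ ⊥ →
      (∀ v ∈ W, delL F lA v ∈ W) → (∀ v ∈ W, delL F lB v ∈ W) → (1 : FA F) ∈ W) ∧
      (∀ v : FA F, (delL F lA v = 0 ∧ delL F lB v = 0) ↔ v ∈ Vn F 0) :=
  delL_invariant_subspace_general F
end
end
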